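/- arXiv:1712.02990 — 3 statements merged into one kernel-verified Lean document; each statement's English description precedes it below -/
import Mathlib

section
/- Let (X1, X2) be a random vector such that each Xi has the unit Fréchet distribution and P(X1 ≤ z, X2 ≤ z) = exp(-θ/z) for all z > 0, where θ ∈ (1, 2]. Define Yi = -1 / log(1 - exp(-1/Xi)) for i = 1, 2. Then lim_{u → 1⁻} P( exp(-1/Y1) > u | exp(-1/Y2) > u ) = 0; that is, the inverted max-stable pair (Y1, Y2) is asymptotically independent (χ = 0). -/
open MeasureTheory ProbabilityTheory Filter Topology

/-- The inverted max-stable transformation `x ↦ -1/log(1 - exp(-1/x))`. -/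
noncomputable def imsTransform (z : ℝ) : ℝ := -1 / Real.log (1 - Real.exp (-1 / z))

lemma imsKey {u x : ℝ} (hu0 : 0 < u) (hu1 : u < 1) (hx : 0 < x) :
    (u < Real.exp (-1 / imsTransform x)) ↔ x < -1 / Real.log (1 - u) := by
  have hneg : -1 / x < 0 := div_neg_of_neg_of_pos (by norm_num) hx
  have hex : Real.exp (-1 / x) < 1 := Real.exp_lt_one_iff.2 hneg
  have hex0 : 0 < Real.exp (-1 / x) := Real.exp_pos _
  have h1 : 0 < 1 - Real.exp (-1 / x) := by linarith
  have hL : Real.log (1 - Real.exp (-1 / x)) < 0 := Real.log_neg h1 (by linarith)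
  have hT : -1 / imsTransform x = Real.log (1 - Real.exp (-1 / x)) := by
    unfold imsTransform
    field_simp
  rw [hT, Real.exp_log h1]
  have hu' : 0 < 1 - u := by linarith
  have hLu : Real.log (1 - u) < 0 := Real.log_neg hu' (by linarith)
  constructor
  · intro h
    have h2 : Real.exp (-1 / x) < 1 - u := by linarith
    have h3 : -1 / x < Real.log (1 - u) := (Real.lt_log_iff_exp_lt hu').2 h2
    have h4 : -1 < Real.log (1 - u) * x := (div_lt_iff₀ hx).1 h3
    rw [lt_div_iff_of_neg hLu]
    nlinarith
  · intro h
    have h4 : -1 < x * Real.log (1 - u) := (lt_div_iff_of_neg hLu).1 h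
    have h3 : -1 / x < Real.log (1 - u) := (div_lt_iff₀ hx).2 (by nlinarith)
    have h2 : Real.exp (-1 / x) < 1 - u := (Real.lt_log_iff_exp_lt hu').1 h3
    linarith

lemma pair_lt {Ω : Type*} [MeasurableSpace Ω] (P : Measure Ω) (X1 X2 : Ω → ℝ) (c : ℝ)
    (h : ∀ z : ℝ, 0 < z → P {ω | X1 ω ≤ z ∧ X2 ω ≤ z} = ENNReal.ofReal (Real.exp (-c / z)))
    {z : ℝ} (hz : 0 < z) :
    P {ω | X1 ω < z ∧ X2 ω < z} = ENNReal.ofReal (Real.exp (-c / z)) := by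
  set w : ℕ → ℝ := fun n => z * (1 - ((n : ℝ) + 2)⁻¹) with hw
  have hn2 : ∀ n : ℕ, (0 : ℝ) < (n : ℝ) + 2 := fun n => by positivity
  have hinv1 : ∀ n : ℕ, ((n : ℝ) + 2)⁻¹ < 1 := fun n => by
    rw [inv_lt_one_iff₀] <;> try (right; linarith [Nat.cast_nonneg (α := ℝ) n])
  have hw0 : ∀ n : ℕ, 0 < w n := fun n => by
    have := hinv1 n; simp only [hw]; nlinarith
  have hwlt : ∀ n : ℕ, w n < z := fun n => by
    have : 0 < ((n : ℝ) + 2)⁻¹ := inv_pos.2 (hn2 n)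
    simp only [hw]; nlinarith
  have hmono : Monotone w := by
    intro m n hmn
    have hc : (m : ℝ) ≤ (n : ℝ) := Nat.cast_le.2 hmn
    have : ((n : ℝ) + 2)⁻¹ ≤ ((m : ℝ) + 2)⁻¹ := by
      apply inv_anti₀ (hn2 m); linarith
    simp only [hw]
    apply mul_le_mul_of_nonneg_left (by linarith) hz.le
  have htend : Tendsto w atTop (𝓝 z) := by
    have h2 : Tendsto (fun n : ℕ => ((n : ℝ) + 2)⁻¹) atTop (𝓝 0) :=
      (tendsto_atTop_add_const_right atTop 2
        (tendsto_natCast_atTop_atTop (R := ℝ))).inv_tendsto_atTop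
    have := (tendsto_const_nhds.sub h2).const_mul z
      (f := fun n : ℕ => (1 : ℝ) - ((n : ℝ) + 2)⁻¹)
    simpa using this
  have hmonoS : Monotone (fun n => {ω | X1 ω ≤ w n ∧ X2 ω ≤ w n}) := fun m n hmn ω hω =>
    ⟨hω.1.trans (hmono hmn), hω.2.trans (hmono hmn)⟩
  have hU : (⋃ n, {ω | X1 ω ≤ w n ∧ X2 ω ≤ w n}) = {ω | X1 ω < z ∧ X2 ω < z} := by
    ext ω
    simp only [Set.mem_iUnion, Set.mem_setOf_eq]
    constructor
    · rintro ⟨n, h1, h2⟩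
      exact ⟨h1.trans_lt (hwlt n), h2.trans_lt (hwlt n)⟩
    · rintro ⟨h1, h2⟩
      obtain ⟨n, hn⟩ := (htend.eventually (eventually_gt_nhds (max_lt h1 h2))).exists
      exact ⟨n, (le_max_left _ _).trans hn.le, (le_max_right _ _).trans hn.le⟩
  have h1 := MeasureTheory.tendsto_measure_iUnion_atTop (μ := P)
    (s := fun n => {ω | X1 ω ≤ w n ∧ X2 ω ≤ w n}) hmonoS
  rw [hU] at h1
  have h2 : Tendsto (fun n => P {ω | X1 ω ≤ w n ∧ X2 ω ≤ w n}) atTop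
      (𝓝 (ENNReal.ofReal (Real.exp (-c / z)))) := by
    have h3 : Tendsto (fun n => ENNReal.ofReal (Real.exp (-c / w n))) atTop
        (𝓝 (ENNReal.ofReal (Real.exp (-c / z)))) := by
      apply (ENNReal.continuous_ofReal.tendsto _).comp
      apply (Real.continuous_exp.tendsto _).comp
      exact tendsto_const_nhds.div htend hz.ne'
    exact h3.congr fun n => (h (w n) (hw0 n)).symm
  exact tendsto_nhds_unique h1 h2

lemma le_zero_null {Ω : Type*} [MeasurableSpace Ω] (P : Measure Ω) (X : Ω → ℝ)
    (h : ∀ z : ℝ, 0 < z → P {ω | X ω ≤ z} = ENNReal.ofReal (Real.exp (-1 / z))) :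
    P {ω | X ω ≤ 0} = 0 := by
  have hb : ∀ n : ℕ, P {ω | X ω ≤ 0} ≤ ENNReal.ofReal (Real.exp (-((n : ℝ) + 1))) := by
    intro n
    have h0 : (0 : ℝ) < ((n : ℝ) + 1)⁻¹ := by positivity
    have hh := h _ h0
    rw [show -1 / ((n : ℝ) + 1)⁻¹ = -((n : ℝ) + 1) by
      field_simp] at hh
    rw [← hh]
    exact measure_mono fun ω hω => le_trans hω h0.le
  have ht : Tendsto (fun n : ℕ => ENNReal.ofReal (Real.exp (-((n : ℝ) + 1)))) atTop (𝓝 0) := by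
    have h1 : Tendsto (fun n : ℕ => (n : ℝ) + 1) atTop atTop :=
      tendsto_atTop_add_const_right atTop 1 (tendsto_natCast_atTop_atTop (R := ℝ))
    have h2 : Tendsto (fun n : ℕ => Real.exp (-((n : ℝ) + 1))) atTop (𝓝 0) :=
      Real.tendsto_exp_atBot.comp (tendsto_neg_atTop_atBot.comp h1)
    simpa using ENNReal.tendsto_ofReal h2
  exact le_zero_iff.1 (ge_of_tendsto' ht hb)

/-- If `(X₁, X₂)` is a max-stable pair with unit Fréchet margins and pairwise extremal
coefficient `θ ∈ (1,2]` (not completely dependent), then the inverted pair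
`Y_i = -1/log(1 - exp(-1/X_i))` is asymptotically independent:
`χ = lim_{u→1⁻} P(F(Y₁) > u | F(Y₂) > u) = 0`, where `F(y) = exp(-1/y)`. -/
theorem inverted_max_stable_asymptotically_independent
    {Ω : Type*} [MeasurableSpace Ω] (P : Measure Ω) [IsProbabilityMeasure P]
    (X1 X2 : Ω → ℝ) (hX1 : Measurable X1) (hX2 : Measurable X2)
    (hF1 : ∀ z : ℝ, 0 < z → P {ω | X1 ω ≤ z} = ENNReal.ofReal (Real.exp (-1 / z)))
    (hF2 : ∀ z : ℝ, 0 < z → P {ω | X2 ω ≤ z} = ENNReal.ofReal (Real.exp (-1 / z)))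
    (θ : ℝ) (hθ : θ ∈ Set.Ioc (1 : ℝ) 2)
    (hjoint : ∀ z : ℝ, 0 < z →
      P {ω | X1 ω ≤ z ∧ X2 ω ≤ z} = ENNReal.ofReal (Real.exp (-θ / z))) :
    Tendsto
      (fun u : ℝ =>
        (P ({ω | u < Real.exp (-1 / imsTransform (X1 ω))} ∩
            {ω | u < Real.exp (-1 / imsTransform (X2 ω))})).toReal /
          (P {ω | u < Real.exp (-1 / imsTransform (X2 ω))}).toReal)
      (nhdsWithin 1 (Set.Iio 1)) (nhds 0) := by
  obtain ⟨hθ1, hθ2⟩ := hθ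
  have hae1 : ∀ᵐ ω ∂P, 0 < X1 ω := by
    rw [ae_iff]
    simp only [not_lt]
    exact le_zero_null P X1 hF1
  have hae2 : ∀ᵐ ω ∂P, 0 < X2 ω := by
    rw [ae_iff]
    simp only [not_lt]
    exact le_zero_null P X2 hF2
  have hev : ∀ᶠ u in nhdsWithin (1 : ℝ) (Set.Iio 1),
      (P ({ω | u < Real.exp (-1 / imsTransform (X1 ω))} ∩
          {ω | u < Real.exp (-1 / imsTransform (X2 ω))})).toReal /
        (P {ω | u < Real.exp (-1 / imsTransform (X2 ω))}).toReal
      = Real.exp ((θ - 1) * Real.log (1 - u)) := by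
    have h0 : ∀ᶠ u in nhdsWithin (1 : ℝ) (Set.Iio 1), 0 < u :=
      (eventually_gt_nhds one_pos).filter_mono nhdsWithin_le_nhds
    filter_upwards [h0, self_mem_nhdsWithin] with u hu0 hu1
    have hu1' : u < 1 := hu1
    have h1u : 0 < 1 - u := by linarith
    have hL : Real.log (1 - u) < 0 := Real.log_neg h1u (by linarith)
    set z : ℝ := -1 / Real.log (1 - u) with hzdef
    have hz : 0 < z := div_pos_of_neg_of_neg (by norm_num) hL
    have hset1 : {ω | u < Real.exp (-1 / imsTransform (X1 ω))} =ᵐ[P] {ω | X1 ω < z} := by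
      rw [Filter.eventuallyEq_set]
      filter_upwards [hae1] with ω hω
      exact imsKey hu0 hu1' hω
    have hset2 : {ω | u < Real.exp (-1 / imsTransform (X2 ω))} =ᵐ[P] {ω | X2 ω < z} := by
      rw [Filter.eventuallyEq_set]
      filter_upwards [hae2] with ω hω
      exact imsKey hu0 hu1' hω
    have hnum : P ({ω | u < Real.exp (-1 / imsTransform (X1 ω))} ∩
        {ω | u < Real.exp (-1 / imsTransform (X2 ω))}) = ENNReal.ofReal (Real.exp (-θ / z)) := by
      rw [measure_congr (hset1.inter hset2)]
      exact pair_lt P X1 X2 θ hjoint hz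
    have hden : P {ω | u < Real.exp (-1 / imsTransform (X2 ω))}
        = ENNReal.ofReal (Real.exp (-1 / z)) := by
      rw [measure_congr hset2]
      have := pair_lt P X2 X2 1 (fun w hw => by simpa [and_self] using hF2 w hw) hz
      simpa [and_self] using this
    rw [hnum, hden, ENNReal.toReal_ofReal (Real.exp_pos _).le,
      ENNReal.toReal_ofReal (Real.exp_pos _).le, ← Real.exp_sub]
    congr 1
    rw [hzdef]
    field_simp
  have hg : Tendsto (fun u : ℝ => Real.exp ((θ - 1) * Real.log (1 - u)))
      (nhdsWithin (1 : ℝ) (Set.Iio 1)) (𝓝 0) := by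
    apply Real.tendsto_exp_atBot.comp
    apply Filter.Tendsto.const_mul_atBot (by linarith : (0 : ℝ) < θ - 1)
    apply Real.tendsto_log_nhdsGT_zero.comp
    rw [tendsto_nhdsWithin_iff]
    constructor
    · have hc : Tendsto (fun u : ℝ => 1 - u) (𝓝 (1:ℝ)) (𝓝 (1-1)) :=
        (continuous_const.sub continuous_id).tendsto 1
      simpa using hc.mono_left nhdsWithin_le_nhds
    · filter_upwards [self_mem_nhdsWithin] with u hu
      exact sub_pos.2 (Set.mem_Iio.1 hu)
  exact Tendsto.congr' (hev.mono fun u h => h.symm) hg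
end

section
/- Let (X1, X2) be a random vector such that each Xi has the unit Fréchet distribution and P(X1 ≤ z, X2 ≤ z) = exp(-θ/z) for all z > 0, where θ ∈ [1, 2]. Define Yi = -1 / log(1 - exp(-1/Xi)) for i = 1, 2. Then for every u ∈ (0, 1), with z = -1/log(u): 2·log P(exp(-1/Y1) > u) / log P(exp(-1/Y1) > u, exp(-1/Y2) > u) - 1 = 2/θ - 1. In particular the coefficient χ̄ of the inverted pair equals 2/θ - 1, which is strictly less than 1 whenever θ > 1. -/
/-! With `F x = exp (-1 / x)` the unit Fréchet distribution function, `F ∘ imsTransform = 1 - F`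
on `(0, ∞)`. Unit Fréchet variables are a.s. positive, so for `u = 1 - F z` the event
`F (Y₁) > u` is a.s. the event `X₁ < z`, of probability `exp (-1 / z)` by left continuity of the
distribution function, and the joint event is a.s. `max X₁ X₂ < z`, of probability
`exp (-θ / z)`. The ratio of the logarithms is `2 / θ` for every `u`. -/

open MeasureTheory ProbabilityTheory Filter

open Real Set Topology
open scoped ENNReal

lemma setOf_lt_eq_iUnion_setOf_le {Ω : Type*} (T : Ω → ℝ) (z : ℝ) :
    {ω | T ω < z} = ⋃ n : ℕ, {ω | T ω ≤ z - 1 / (n + 1)} := by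
  ext ω
  simp only [mem_ofPred_eq, mem_iUnion]
  constructor
  · intro h
    obtain ⟨n, hn⟩ := exists_nat_one_div_lt (sub_pos.2 h)
    exact ⟨n, by linarith⟩
  · rintro ⟨n, hn⟩
    linarith [Nat.one_div_pos_of_nat (α := ℝ) (n := n)]

section FrechetTail

variable {Ω : Type*} [MeasurableSpace Ω] (μ : Measure Ω) (T : Ω → ℝ)

lemma measure_setOf_lt_eq_of_tendsto {z : ℝ} {c : ℝ≥0∞}
    (h : Tendsto (fun w => μ {ω | T ω ≤ w}) (𝓝[<] z) (𝓝 c)) :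
    μ {ω | T ω < z} = c := by
  have hseq : Tendsto (fun n : ℕ => z - 1 / ((n : ℝ) + 1)) atTop (𝓝[<] z) := by
    refine tendsto_nhdsWithin_of_tendsto_nhds_of_eventually_within _ ?_ ?_
    · simpa using (tendsto_const_nhds (x := z)).sub tendsto_one_div_add_atTop_nhds_zero_nat
    · exact Eventually.of_forall fun n => sub_lt_self z Nat.one_div_pos_of_nat
  have hmono : Monotone fun n : ℕ => {ω | T ω ≤ z - 1 / ((n : ℝ) + 1)} := by
    intro m n hmn ω hω
    simp only [mem_ofPred_eq] at hω ⊢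
    linarith [Nat.one_div_le_one_div (α := ℝ) hmn]
  rw [setOf_lt_eq_iUnion_setOf_le]
  exact tendsto_nhds_unique (tendsto_measure_iUnion_atTop hmono) (h.comp hseq)

variable {μ T} {a : ℝ}

lemma measure_setOf_lt_of_frechet
    (h : ∀ w : ℝ, 0 < w → μ {ω | T ω ≤ w} = ENNReal.ofReal (exp (a / w)))
    {z : ℝ} (hz : 0 < z) :
    μ {ω | T ω < z} = ENNReal.ofReal (exp (a / z)) := by
  apply measure_setOf_lt_eq_of_tendsto
  have hcont : ContinuousAt (fun w => ENNReal.ofReal (exp (a / w))) z :=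
    ENNReal.continuous_ofReal.continuousAt.comp
      (continuous_exp.continuousAt.comp (continuousAt_const.div continuousAt_id hz.ne'))
  refine (hcont.tendsto.mono_left nhdsWithin_le_nhds).congr' ?_
  filter_upwards [inter_mem_nhdsWithin _ (Ioi_mem_nhds hz)] with w hw
  exact (h w hw.2).symm

lemma ae_pos_of_frechet (ha : a < 0)
    (h : ∀ w : ℝ, 0 < w → μ {ω | T ω ≤ w} = ENNReal.ofReal (exp (a / w))) :
    ∀ᵐ ω ∂μ, 0 < T ω := by
  have htail : Tendsto (fun w => ENNReal.ofReal (exp (a / w))) (𝓝[>] 0) (𝓝 0) := by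
    have : Tendsto (fun w : ℝ => a / w) (𝓝[>] 0) atBot := by
      simpa [div_eq_mul_inv] using tendsto_inv_nhdsGT_zero.const_mul_atTop_of_neg ha
    simpa [Function.comp_def] using
      (ENNReal.continuous_ofReal.tendsto 0).comp (tendsto_exp_atBot.comp this)
  simp only [ae_iff, not_lt]
  refine le_zero_iff.1 (ge_of_tendsto htail ?_)
  filter_upwards [self_mem_nhdsWithin] with w hw
  calc μ {ω | T ω ≤ 0} ≤ μ {ω | T ω ≤ w} := measure_mono fun ω (hω : T ω ≤ 0) =>
      show T ω ≤ w from hω.trans (le_of_lt hw)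
    _ = ENNReal.ofReal (exp (a / w)) := h w hw

end FrechetTail

lemma exp_neg_one_div_lt_exp_neg_one_div_iff {t z : ℝ} (ht : 0 < t) (hz : 0 < z) :
    exp (-1 / t) < exp (-1 / z) ↔ t < z := by
  rw [exp_lt_exp, neg_div, neg_div, neg_lt_neg_iff, one_div_lt_one_div hz ht]

lemma exp_neg_one_div_imsTransform {t : ℝ} (ht : 0 < t) :
    exp (-1 / imsTransform t) = 1 - exp (-1 / t) := by
  have hpos : 0 < 1 - exp (-1 / t) :=
    sub_pos.2 (exp_lt_one_iff.2 (div_neg_of_neg_of_pos (by norm_num) ht))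
  rw [imsTransform, neg_div, one_div_div, div_neg, div_one, neg_neg, exp_log hpos]

lemma one_sub_exp_neg_one_div_lt_iff {t z : ℝ} (ht : 0 < t) (hz : 0 < z) :
    1 - exp (-1 / z) < exp (-1 / imsTransform t) ↔ t < z := by
  rw [exp_neg_one_div_imsTransform ht, sub_lt_sub_iff_left,
    exp_neg_one_div_lt_exp_neg_one_div_iff ht hz]

lemma exists_pos_one_sub_exp_neg_one_div_eq {u : ℝ} (hu : u ∈ Ioo (0 : ℝ) 1) :
    ∃ z : ℝ, 0 < z ∧ 1 - exp (-1 / z) = u := by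
  have hlog : log (1 - u) < 0 := log_neg (by linarith [hu.2]) (by linarith [hu.1])
  refine ⟨-1 / log (1 - u), div_pos_of_neg_of_neg (by norm_num) hlog, ?_⟩
  rw [neg_div, one_div_div, div_neg, div_one, neg_neg, exp_log (by linarith [hu.2])]
  ring

theorem inverted_max_stable_chibar_general
    {Ω : Type*} [MeasurableSpace Ω] (P : Measure Ω)
    (X1 X2 : Ω → ℝ)
    (hF1 : ∀ z : ℝ, 0 < z → P {ω | X1 ω ≤ z} = ENNReal.ofReal (Real.exp (-1 / z)))
    (hF2 : ∀ z : ℝ, 0 < z → P {ω | X2 ω ≤ z} = ENNReal.ofReal (Real.exp (-1 / z)))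
    (θ : ℝ) (hθ : θ ∈ Set.Icc (1 : ℝ) 2)
    (hjoint : ∀ z : ℝ, 0 < z →
      P {ω | X1 ω ≤ z ∧ X2 ω ≤ z} = ENNReal.ofReal (Real.exp (-θ / z))) :
    (∀ u ∈ Set.Ioo (0 : ℝ) 1,
      2 * Real.log (P {ω | u < Real.exp (-1 / imsTransform (X1 ω))}).toReal /
          Real.log (P {ω | u < Real.exp (-1 / imsTransform (X1 ω)) ∧
              u < Real.exp (-1 / imsTransform (X2 ω))}).toReal
        - 1 = 2 / θ - 1)
      ∧ (1 < θ → 2 / θ - 1 < 1) := by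
  have hθ0 : 0 < θ := by linarith [hθ.1]
  refine ⟨fun u hu => ?_, fun h => by linarith [(div_lt_iff₀ hθ0).2 (by linarith : 2 < 2 * θ)]⟩
  obtain ⟨z, hz, rfl⟩ := exists_pos_one_sub_exp_neg_one_div_eq hu
  have hpos1 := ae_pos_of_frechet (by norm_num) hF1
  have hpos2 := ae_pos_of_frechet (by norm_num) hF2
  have hmax : ∀ w : ℝ, 0 < w →
      P {ω | max (X1 ω) (X2 ω) ≤ w} = ENNReal.ofReal (exp (-θ / w)) := by
    simpa only [max_le_iff] using hjoint
  have hA : P {ω | 1 - exp (-1 / z) < exp (-1 / imsTransform (X1 ω))} =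
      ENNReal.ofReal (exp (-1 / z)) := by
    rw [← measure_setOf_lt_of_frechet hF1 hz]
    refine measure_congr (eventuallyEq_set.2 ?_)
    filter_upwards [hpos1] with ω h1
    exact one_sub_exp_neg_one_div_lt_iff h1 hz
  have hB : P {ω | 1 - exp (-1 / z) < exp (-1 / imsTransform (X1 ω)) ∧
      1 - exp (-1 / z) < exp (-1 / imsTransform (X2 ω))} =
      ENNReal.ofReal (exp (-θ / z)) := by
    rw [← measure_setOf_lt_of_frechet hmax hz]
    refine measure_congr (eventuallyEq_set.2 ?_)
    filter_upwards [hpos1, hpos2] with ω h1 h2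
    simp only [max_lt_iff, one_sub_exp_neg_one_div_lt_iff h1 hz,
      one_sub_exp_neg_one_div_lt_iff h2 hz]
  rw [hA, hB, ENNReal.toReal_ofReal (exp_nonneg _), ENNReal.toReal_ofReal (exp_nonneg _),
    log_exp, log_exp]
  field_simp

/-- If `(X₁, X₂)` is a max-stable pair with unit Fréchet margins and pairwise extremal
coefficient `θ ∈ [1,2]`, and `Y_i = -1/log(1 - exp(-1/X_i))` is the inverted pair, then
for every `u ∈ (0,1)` the quantity
`2·log P(F(Y₁) > u) / log P(F(Y₁) > u, F(Y₂) > u) - 1` equals `2/θ - 1` (so the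
coefficient `χ̄` of the inverted pair equals `2/θ - 1`), which is strictly less
than `1` whenever `θ > 1`. Here `F(y) = exp(-1/y)`. -/
theorem inverted_max_stable_chibar
    {Ω : Type*} [MeasurableSpace Ω] (P : Measure Ω) [IsProbabilityMeasure P]
    (X1 X2 : Ω → ℝ) (hX1 : Measurable X1) (hX2 : Measurable X2)
    (hF1 : ∀ z : ℝ, 0 < z → P {ω | X1 ω ≤ z} = ENNReal.ofReal (Real.exp (-1 / z)))
    (hF2 : ∀ z : ℝ, 0 < z → P {ω | X2 ω ≤ z} = ENNReal.ofReal (Real.exp (-1 / z)))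
    (θ : ℝ) (hθ : θ ∈ Set.Icc (1 : ℝ) 2)
    (hjoint : ∀ z : ℝ, 0 < z →
      P {ω | X1 ω ≤ z ∧ X2 ω ≤ z} = ENNReal.ofReal (Real.exp (-θ / z))) :
    (∀ u ∈ Set.Ioo (0 : ℝ) 1,
      2 * Real.log (P {ω | u < Real.exp (-1 / imsTransform (X1 ω))}).toReal /
          Real.log (P {ω | u < Real.exp (-1 / imsTransform (X1 ω)) ∧
              u < Real.exp (-1 / imsTransform (X2 ω))}).toReal
        - 1 = 2 / θ - 1)
      ∧ (1 < θ → 2 / θ - 1 < 1) :=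
  inverted_max_stable_chibar_general P X1 X2 hF1 hF2 θ hθ hjoint
end

section
/- Let a ∈ (0, 1). Let (X1, X2) be a random vector with P(X1 ≤ x1, X2 ≤ x2) = exp(-V_X(x1, x2)) for all x1, x2 > 0, where V_X : (0,∞)² → (0,∞) is homogeneous of degree -1 (V_X(t·x1, t·x2) = t^{-1}·V_X(x1, x2) for t > 0). Let (Y1, Y2) be a random vector, independent of (X1, X2), of the form Yi = -1/log(1 - exp(-1/X'i)), where (X'1, X'2) has unit Fréchet margins and joint distribution P(X'1 ≤ x1, X'2 ≤ x2) = exp(-V_Y(x1, x2)) for x1, x2 > 0. Then, with ω(z) = -1/log(1 - exp(-1/z)), for all z1, z2 > 0: P( max(a·X1, (1-a)·Y1) ≤ z1, max(a·X2, (1-a)·Y2) ≤ z2 ) = exp(-a·V_X(z1, z2)) · { -1 + exp(-(1-a)/z1) + exp(-(1-a)/z2) + exp( -V_Y( ω(z1/(1-a)), ω(z2/(1-a)) ) ) }. -/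
/-!
Scaling by `a` and `1 - a` turns the event into `{X ≤ z / a} ∩ {Y ≤ z / (1 - a)}`, and
independence splits its probability into a product. The max-stable factor is
`exp (-V_X (z / a)) = exp (-a V_X z)` by homogeneity. For the inverted factor, `ω` satisfies
`ω w ≤ c ↔ ω c ≤ w` on `(0, ∞)`. Since a unit Fréchet variable
is almost surely positive and has no atoms, `{ω(W₁) ≤ c₁, ω(W₂) ≤ c₂}` is almost surely the
joint survival event `{W₁ > ω c₁, W₂ > ω c₂}`, whose probability follows from inclusion–exclusion
and the identity `exp (-1 / ω c) = 1 - exp (-1 / c)`.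
-/

open MeasureTheory ProbabilityTheory Filter Topology Set

section imsTransform

variable {x : ℝ}

lemma exp_neg_one_div_lt_one (hx : 0 < x) : Real.exp (-1 / x) < 1 :=
  Real.exp_lt_one_iff.2 (div_neg_of_neg_of_pos (by norm_num) hx)

lemma one_sub_exp_neg_one_div_pos (hx : 0 < x) : 0 < 1 - Real.exp (-1 / x) :=
  sub_pos.2 (exp_neg_one_div_lt_one hx)

lemma log_one_sub_exp_neg_one_div_neg (hx : 0 < x) : Real.log (1 - Real.exp (-1 / x)) < 0 :=
  Real.log_neg (one_sub_exp_neg_one_div_pos hx) (by linarith [Real.exp_pos (-1 / x)])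

lemma imsTransform_pos (hx : 0 < x) : 0 < imsTransform x :=
  div_pos_of_neg_of_neg (by norm_num) (log_one_sub_exp_neg_one_div_neg hx)

lemma exp_neg_one_div_imsTransform_s14 (hx : 0 < x) :
    Real.exp (-1 / imsTransform x) = 1 - Real.exp (-1 / x) := by
  rw [imsTransform, div_div_eq_mul_div, neg_one_mul, neg_div_neg_eq, div_one,
    Real.exp_log (one_sub_exp_neg_one_div_pos hx)]

lemma imsTransform_le_iff_one_le (hx : 0 < x) {c : ℝ} (hc : 0 < c) :
    imsTransform x ≤ c ↔ 1 ≤ Real.exp (-1 / x) + Real.exp (-1 / c) := by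
  rw [imsTransform, div_le_iff_of_neg (log_one_sub_exp_neg_one_div_neg hx), mul_comm,
    ← le_div_iff₀ hc, Real.log_le_iff_le_exp (one_sub_exp_neg_one_div_pos hx), sub_le_iff_le_add']

lemma imsTransform_le_comm (hx : 0 < x) {c : ℝ} (hc : 0 < c) :
    imsTransform x ≤ c ↔ imsTransform c ≤ x := by
  rw [imsTransform_le_iff_one_le hx hc, imsTransform_le_iff_one_le hc hx, add_comm]

end imsTransform

section UnitFrechet

variable {Ω : Type*} [MeasurableSpace Ω] {P : Measure Ω} {W : Ω → ℝ}

lemma measure_eq_eq_zero_of_continuousAt [IsProbabilityMeasure P] (hW : Measurable W)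
    {F : ℝ → ℝ} {b : ℝ} (hF : ∀ᶠ z in 𝓝 b, P.real {ω | W ω ≤ z} = F z)
    (hFb : ContinuousAt F b) : P {ω | W ω = b} = 0 := by
  have := Measure.isProbabilityMeasure_map (μ := P) hW.aemeasurable
  have hcdf : ContinuousAt (cdf (P.map W)) b := by
    refine hFb.congr ?_
    filter_upwards [hF] with z hz
    rw [cdf_eq_real, map_measureReal_apply hW measurableSet_Iic, ← hz]
    rfl
  have hatom := (cdf (P.map W)).measure_singleton b
  rwa [measure_cdf, Measure.map_apply hW (measurableSet_singleton b),
    hcdf.continuousWithinAt.leftLim_eq, sub_self, ENNReal.ofReal_zero] at hatom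

def IsUnitFrechet (P : Measure Ω) (W : Ω → ℝ) : Prop :=
  ∀ z : ℝ, 0 < z → P {ω | W ω ≤ z} = ENNReal.ofReal (Real.exp (-1 / z))

lemma IsUnitFrechet.measure_le_zero (hF : IsUnitFrechet P W) : P {ω | W ω ≤ 0} = 0 := by
  have hbound : ∀ᶠ z in 𝓝[>] (0 : ℝ), P {ω | W ω ≤ 0} ≤ ENNReal.ofReal (Real.exp (-1 / z)) := by
    filter_upwards [self_mem_nhdsWithin] with z hz
    rw [← hF z hz]
    exact measure_mono fun ω (hω : W ω ≤ 0) => (hω.trans (le_of_lt hz) : W ω ≤ z)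
  have hlim : Tendsto (fun z : ℝ => ENNReal.ofReal (Real.exp (-1 / z))) (𝓝[>] 0) (𝓝 0) := by
    rw [← ENNReal.ofReal_zero]
    refine (ENNReal.continuous_ofReal.tendsto 0).comp (Real.tendsto_exp_atBot.comp ?_)
    exact (tendsto_neg_atTop_atBot.comp tendsto_inv_nhdsGT_zero).congr fun z => by simp [neg_div]
  exact nonpos_iff_eq_zero.1 (ge_of_tendsto hlim hbound)

lemma IsUnitFrechet.measure_eq_eq_zero [IsProbabilityMeasure P] (hW : Measurable W)
    (hF : IsUnitFrechet P W) {b : ℝ} (hb : 0 < b) : P {ω | W ω = b} = 0 := by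
  refine measure_eq_eq_zero_of_continuousAt hW (F := fun z => Real.exp (-1 / z)) ?_ ?_
  · filter_upwards [Ioi_mem_nhds hb] with z hz
    rw [measureReal_def, hF z hz, ENNReal.toReal_ofReal (Real.exp_nonneg _)]
  · exact (continuousAt_const.div continuousAt_id hb.ne').rexp

lemma IsUnitFrechet.ae_imsTransform_le_iff [IsProbabilityMeasure P] (hW : Measurable W)
    (hF : IsUnitFrechet P W) {c : ℝ} (hc : 0 < c) :
    ∀ᵐ ω ∂P, (imsTransform (W ω) ≤ c ↔ imsTransform c < W ω) := by
  have hpos : ∀ᵐ ω ∂P, 0 < W ω := by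
    filter_upwards [measure_eq_zero_iff_ae_notMem.1 hF.measure_le_zero] with ω hω
    exact not_le.1 hω
  have hatom : ∀ᵐ ω ∂P, W ω ≠ imsTransform c :=
    measure_eq_zero_iff_ae_notMem.1 (hF.measure_eq_eq_zero hW (imsTransform_pos hc))
  filter_upwards [hpos, hatom] with ω hω hne
  rw [imsTransform_le_comm hω hc, le_iff_lt_or_eq, or_iff_left (Ne.symm hne)]

end UnitFrechet

lemma measureReal_compl_inter_compl {Ω : Type*} [MeasurableSpace Ω] (P : Measure Ω)
    [IsProbabilityMeasure P] {s t : Set Ω} (hs : MeasurableSet s) (ht : MeasurableSet t) :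
    P.real (sᶜ ∩ tᶜ) = 1 - P.real s - P.real t + P.real (s ∩ t) := by
  rw [← compl_union, probReal_compl_eq_one_sub (hs.union ht)]
  linarith [measureReal_union_add_inter (μ := P) (s := s) ht]

lemma measureReal_imsTransform_le_and_le {Ω : Type*} [MeasurableSpace Ω] {P : Measure Ω}
    [IsProbabilityMeasure P] {W1 W2 : Ω → ℝ} (hW1 : Measurable W1) (hW2 : Measurable W2)
    (hF1 : IsUnitFrechet P W1) (hF2 : IsUnitFrechet P W2) {c1 c2 : ℝ} (hc1 : 0 < c1)
    (hc2 : 0 < c2) :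
    P.real {ω | imsTransform (W1 ω) ≤ c1 ∧ imsTransform (W2 ω) ≤ c2}
      = -1 + Real.exp (-1 / c1) + Real.exp (-1 / c2)
        + P.real {ω | W1 ω ≤ imsTransform c1 ∧ W2 ω ≤ imsTransform c2} := by
  have hsurv : {ω | imsTransform (W1 ω) ≤ c1 ∧ imsTransform (W2 ω) ≤ c2}
      =ᵐ[P] ({ω | W1 ω ≤ imsTransform c1}ᶜ ∩ {ω | W2 ω ≤ imsTransform c2}ᶜ : Set Ω) := by
    filter_upwards [hF1.ae_imsTransform_le_iff hW1 hc1, hF2.ae_imsTransform_le_iff hW2 hc2]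
      with ω h1 h2
    change (_ ∧ _) = (¬W1 ω ≤ _ ∧ ¬W2 ω ≤ _)
    rw [h1, h2, not_le, not_le]
  rw [measureReal_congr hsurv,
    measureReal_compl_inter_compl P (measurableSet_le hW1 measurable_const)
      (measurableSet_le hW2 measurable_const),
    measureReal_def, measureReal_def, hF1 _ (imsTransform_pos hc1), hF2 _ (imsTransform_pos hc2),
    ENNReal.toReal_ofReal (Real.exp_nonneg _), ENNReal.toReal_ofReal (Real.exp_nonneg _),
    exp_neg_one_div_imsTransform_s14 hc1, exp_neg_one_div_imsTransform_s14 hc2, ← ofPred_and]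
  ring

theorem max_mixture_ms_ims_bivariate_cdf_general
    {Ω : Type*} [MeasurableSpace Ω] (P : Measure Ω) [IsProbabilityMeasure P]
    (a : ℝ) (ha : a ∈ Set.Ioo (0 : ℝ) 1)
    (X1 X2 W1 W2 : Ω → ℝ)
    (hW1 : Measurable W1) (hW2 : Measurable W2)
    (VX : ℝ → ℝ → ℝ)
    (hVXhom : ∀ t x1 x2 : ℝ, 0 < t → 0 < x1 → 0 < x2 →
      VX (t * x1) (t * x2) = t⁻¹ * VX x1 x2)
    (hXjoint : ∀ x1 x2 : ℝ, 0 < x1 → 0 < x2 →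
      P {ω | X1 ω ≤ x1 ∧ X2 ω ≤ x2} = ENNReal.ofReal (Real.exp (-VX x1 x2)))
    (VY : ℝ → ℝ → ℝ)
    (hW1F : ∀ z : ℝ, 0 < z → P {ω | W1 ω ≤ z} = ENNReal.ofReal (Real.exp (-1 / z)))
    (hW2F : ∀ z : ℝ, 0 < z → P {ω | W2 ω ≤ z} = ENNReal.ofReal (Real.exp (-1 / z)))
    (hWjoint : ∀ x1 x2 : ℝ, 0 < x1 → 0 < x2 →
      P {ω | W1 ω ≤ x1 ∧ W2 ω ≤ x2} = ENNReal.ofReal (Real.exp (-VY x1 x2)))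
    (hindep : IndepFun (fun ω => (X1 ω, X2 ω))
      (fun ω => (imsTransform (W1 ω), imsTransform (W2 ω))) P) :
    ∀ z1 z2 : ℝ, 0 < z1 → 0 < z2 →
      P {ω | max (a * X1 ω) ((1 - a) * imsTransform (W1 ω)) ≤ z1 ∧
             max (a * X2 ω) ((1 - a) * imsTransform (W2 ω)) ≤ z2}
        = ENNReal.ofReal (Real.exp (-(a * VX z1 z2)))
          * ENNReal.ofReal (-1 + Real.exp (-(1 - a) / z1) + Real.exp (-(1 - a) / z2)
              + Real.exp (-VY (imsTransform (z1 / (1 - a)))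
                  (imsTransform (z2 / (1 - a))))) := by
  intro z1 z2 hz1 hz2
  obtain ⟨ha0, ha1⟩ := ha
  have h1a : 0 < 1 - a := sub_pos.2 ha1
  have hevent : {ω | max (a * X1 ω) ((1 - a) * imsTransform (W1 ω)) ≤ z1 ∧
      max (a * X2 ω) ((1 - a) * imsTransform (W2 ω)) ≤ z2}
      = (fun ω => (X1 ω, X2 ω)) ⁻¹' (Iic (z1 / a) ×ˢ Iic (z2 / a)) ∩
        (fun ω => (imsTransform (W1 ω), imsTransform (W2 ω))) ⁻¹'
          (Iic (z1 / (1 - a)) ×ˢ Iic (z2 / (1 - a))) := by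
    ext ω
    simp only [mem_ofPred_eq, mem_inter_iff, mem_preimage, mem_prod, mem_Iic,
      max_le_iff, le_div_iff₀' ha0, le_div_iff₀' h1a]
    tauto
  rw [hevent, hindep.measure_inter_preimage_eq_mul _ _ (measurableSet_Iic.prod measurableSet_Iic)
    (measurableSet_Iic.prod measurableSet_Iic)]
  congr 1
  · change P {ω | X1 ω ≤ z1 / a ∧ X2 ω ≤ z2 / a} = _
    rw [hXjoint _ _ (div_pos hz1 ha0) (div_pos hz2 ha0), div_eq_inv_mul, div_eq_inv_mul,
      hVXhom _ _ _ (inv_pos.2 ha0) hz1 hz2, inv_inv]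
  · change P {ω | imsTransform (W1 ω) ≤ z1 / (1 - a) ∧ imsTransform (W2 ω) ≤ z2 / (1 - a)} = _
    rw [← ofReal_measureReal, measureReal_imsTransform_le_and_le hW1 hW2 hW1F hW2F
      (div_pos hz1 h1a) (div_pos hz2 h1a), measureReal_def,
      hWjoint _ _ (imsTransform_pos (div_pos hz1 h1a)) (imsTransform_pos (div_pos hz2 h1a)),
      ENNReal.toReal_ofReal (Real.exp_nonneg _),
      div_div_eq_mul_div, div_div_eq_mul_div, neg_one_mul]

/-- Equation (13): the explicit bivariate distribution function of a max-mixture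
process `Z_i = max(a·X_i, (1-a)·Y_i)`, where `(X₁, X₂)` is a max-stable pair with
exponent measure `V_X` homogeneous of degree `-1`, and `(Y₁, Y₂)` is an independent
inverted max-stable pair `Y_i = -1/log(1 - exp(-1/W_i))` obtained from a max-stable
pair `(W₁, W₂)` with unit Fréchet margins and exponent measure `V_Y`. -/
theorem max_mixture_ms_ims_bivariate_cdf
    {Ω : Type*} [MeasurableSpace Ω] (P : Measure Ω) [IsProbabilityMeasure P]
    (a : ℝ) (ha : a ∈ Set.Ioo (0 : ℝ) 1)
    (X1 X2 W1 W2 : Ω → ℝ)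
    (hX1 : Measurable X1) (hX2 : Measurable X2)
    (hW1 : Measurable W1) (hW2 : Measurable W2)
    (VX : ℝ → ℝ → ℝ)
    (hVXpos : ∀ x1 x2 : ℝ, 0 < x1 → 0 < x2 → 0 < VX x1 x2)
    (hVXhom : ∀ t x1 x2 : ℝ, 0 < t → 0 < x1 → 0 < x2 →
      VX (t * x1) (t * x2) = t⁻¹ * VX x1 x2)
    (hXjoint : ∀ x1 x2 : ℝ, 0 < x1 → 0 < x2 →
      P {ω | X1 ω ≤ x1 ∧ X2 ω ≤ x2} = ENNReal.ofReal (Real.exp (-VX x1 x2)))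
    (VY : ℝ → ℝ → ℝ)
    (hW1F : ∀ z : ℝ, 0 < z → P {ω | W1 ω ≤ z} = ENNReal.ofReal (Real.exp (-1 / z)))
    (hW2F : ∀ z : ℝ, 0 < z → P {ω | W2 ω ≤ z} = ENNReal.ofReal (Real.exp (-1 / z)))
    (hWjoint : ∀ x1 x2 : ℝ, 0 < x1 → 0 < x2 →
      P {ω | W1 ω ≤ x1 ∧ W2 ω ≤ x2} = ENNReal.ofReal (Real.exp (-VY x1 x2)))
    (hindep : IndepFun (fun ω => (X1 ω, X2 ω))
      (fun ω => (imsTransform (W1 ω), imsTransform (W2 ω))) P) :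
    ∀ z1 z2 : ℝ, 0 < z1 → 0 < z2 →
      P {ω | max (a * X1 ω) ((1 - a) * imsTransform (W1 ω)) ≤ z1 ∧
             max (a * X2 ω) ((1 - a) * imsTransform (W2 ω)) ≤ z2}
        = ENNReal.ofReal (Real.exp (-(a * VX z1 z2)))
          * ENNReal.ofReal (-1 + Real.exp (-(1 - a) / z1) + Real.exp (-(1 - a) / z2)
              + Real.exp (-VY (imsTransform (z1 / (1 - a)))
                  (imsTransform (z2 / (1 - a))))) :=
  max_mixture_ms_ims_bivariate_cdf_general P a ha X1 X2 W1 W2 hW1 hW2 VX hVXhom hXjoint VY hW1F hW2F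
    hWjoint hindep
end
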